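/- arXiv:2204.06842 — 2 statements merged into one kernel-verified Lean document; each statement's English description precedes it below -/
import Mathlib

section
/- Let F be a co-bipartite graph with (A,B) a bipartition of the complement of F, let k be a nonnegative integer, and let G be the graph constructed from F, A, B and k as described, with K = k + |A|(|A|−1)/2. If H is a chordal completion of G with at most K fill edges, then A is a clique of H. -/
variable {V : Type*}

/-- `f : ZMod n → V` realizes an induced cycle of length `n` in `G`. -/
def IsInducedCycleMap (G : SimpleGraph V) (n : ℕ) (f : ZMod n → V) : Prop :=
  Function.Injective f ∧ ∀ i j : ZMod n, G.Adj (f i) (f j) ↔ (j = i + 1 ∨ i = j + 1)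

/-- A graph is chordal if it has no induced cycle of length at least four. -/
def Chordal (G : SimpleGraph V) : Prop :=
  ∀ n : ℕ, 4 ≤ n → ¬ ∃ f : ZMod n → V, IsInducedCycleMap G n f

/-- `S` is a vertex separator of `G`: two vertices outside `S` lie in distinct
connected components of `G - S`. -/
def IsSeparator (G : SimpleGraph V) (S : Set V) : Prop :=
  ∃ u w : ↥(Sᶜ), ¬ (G.induce Sᶜ).Reachable u w

/-- `S` is a minimal vertex separator of `G`. -/
def IsMinimalSeparator (G : SimpleGraph V) (S : Set V) : Prop :=
  ∃ (u w : V) (hu : u ∈ Sᶜ) (hw : w ∈ Sᶜ),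
    (¬ (G.induce Sᶜ).Reachable ⟨u, hu⟩ ⟨w, hw⟩) ∧
    ∀ (S' : Set V) (hss : S' ⊂ S),
      (G.induce S'ᶜ).Reachable
        ⟨u, Set.compl_subset_compl.mpr hss.subset hu⟩
        ⟨w, Set.compl_subset_compl.mpr hss.subset hw⟩

/-- `H` is a chordal completion of `G`: a chordal spanning supergraph. -/
def IsChordalCompletion (G H : SimpleGraph V) : Prop :=
  G ≤ H ∧ Chordal H

/-- `H` is a minimum chordal completion of `G`: no chordal completion has fewer edges. -/
def IsMinChordalCompletion (G H : SimpleGraph V) : Prop :=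
  IsChordalCompletion G H ∧
    ∀ H' : SimpleGraph V, IsChordalCompletion G H' →
      H.edgeSet.ncard ≤ H'.edgeSet.ncard

/-- The number of fill edges of a completion `H` of `G`. -/
noncomputable def fill (G H : SimpleGraph V) : ℕ :=
  H.edgeSet.ncard - G.edgeSet.ncard

/-- Auxiliary relation defining the gadget graph built from a co-bipartite graph `F`
with bipartition `(A, B)` of its complement: the vertices are
`V(F) ⊕ {c_1, …, c_{K+1}} ⊕ {v}`; the edges of `F` with both endpoints in `A` are
deleted, each `c_i` is made adjacent to every other vertex except `v`, and `v` is
adjacent exactly to the vertices of `A`. -/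
def gadgetRel {α : Type*} (F : SimpleGraph α) (A : Set α) (K : ℕ) :
    (α ⊕ Fin (K + 1) ⊕ Unit) → (α ⊕ Fin (K + 1) ⊕ Unit) → Prop
  | .inl u, .inl w => F.Adj u w ∧ ¬(u ∈ A ∧ w ∈ A)
  | .inl _, .inr (.inl _) => True
  | .inr (.inl _), .inr (.inl _) => True
  | .inl a, .inr (.inr _) => a ∈ A
  | _, _ => False

/-- The gadget graph `G` of the reduction. -/
def gadgetGraph {α : Type*} (F : SimpleGraph α) (A : Set α) (K : ℕ) :
    SimpleGraph (α ⊕ Fin (K + 1) ⊕ Unit) :=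
  SimpleGraph.fromRel (gadgetRel F A K)

/-! If two vertices `a, a'` of `A` were non-adjacent in `H`, then for every `i` the 4-cycle
`v, a, c_i, a'` of `G` could only get its chord `v c_i` in `H`; these are `K + 1` fill edges. -/

namespace Chordal

variable {G : SimpleGraph V}

theorem adj_or_adj_of_cycle4 (hG : Chordal G) {p₀ p₁ p₂ p₃ : V}
    (h₀₁ : G.Adj p₀ p₁) (h₁₂ : G.Adj p₁ p₂) (h₂₃ : G.Adj p₂ p₃) (h₃₀ : G.Adj p₃ p₀)
    (h₀₂ : p₀ ≠ p₂) (h₁₃ : p₁ ≠ p₃) : G.Adj p₀ p₂ ∨ G.Adj p₁ p₃ := by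
  by_contra! h
  have cases : ∀ z : ZMod 4, z = 0 ∨ z = 1 ∨ z = 2 ∨ z = 3 := by decide
  refine hG 4 le_rfl ⟨![p₀, p₁, p₂, p₃], fun i j hij => ?_, fun i j => ?_⟩ <;>
    rcases cases i with rfl | rfl | rfl | rfl <;> rcases cases j with rfl | rfl | rfl | rfl <;>
    simp_all [G.adj_comm, h₀₁.ne, h₁₂.ne, h₂₃.ne, h₃₀.ne, h₀₁.ne', h₁₂.ne', h₂₃.ne', h₃₀.ne'] <;>
    decide

end Chordal

theorem fill_eq_ncard_sdiff [Finite V] {G H : SimpleGraph V} (h : G ≤ H) :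
    fill G H = (H.edgeSet \ G.edgeSet).ncard := by
  rw [fill, Set.ncard_sdiff (SimpleGraph.edgeSet_mono h)]

section Gadget

variable {α : Type*} {F : SimpleGraph α} {A : Set α} {K : ℕ}

/- The vertex `v` of the gadget is `.inr (.inr ())` (the apex) and `c_{i+1}` is `.inr (.inl i)`
(a hub). -/

theorem gadgetGraph_adj_inl_apex {a : α} (ha : a ∈ A) :
    (gadgetGraph F A K).Adj (.inl a) (.inr (.inr ())) := by
  simp [gadgetGraph, gadgetRel, ha]

theorem gadgetGraph_adj_inl_hub (a : α) (i : Fin (K + 1)) :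
    (gadgetGraph F A K).Adj (.inl a) (.inr (.inl i)) := by
  simp [gadgetGraph, gadgetRel]

theorem gadgetGraph_not_adj_apex_hub (i : Fin (K + 1)) :
    ¬ (gadgetGraph F A K).Adj (.inr (.inr ())) (.inr (.inl i)) := by
  simp [gadgetGraph, gadgetRel]

theorem IsChordalCompletion.gadget_adj_apex_hub {H : SimpleGraph (α ⊕ Fin (K + 1) ⊕ Unit)}
    (hH : IsChordalCompletion (gadgetGraph F A K) H) {a a' : α} (ha : a ∈ A) (ha' : a' ∈ A)
    (hne : a ≠ a') (hnadj : ¬ H.Adj (.inl a) (.inl a')) (i : Fin (K + 1)) :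
    H.Adj (.inr (.inr ())) (.inr (.inl i)) :=
  (hH.2.adj_or_adj_of_cycle4 (hH.1 (gadgetGraph_adj_inl_apex ha).symm)
    (hH.1 (gadgetGraph_adj_inl_hub a i)) (hH.1 (gadgetGraph_adj_inl_hub a' i).symm)
    (hH.1 (gadgetGraph_adj_inl_apex ha')) (by simp) (by simpa using hne)).resolve_right hnadj

theorem succ_le_fill_gadget [Finite α] {H : SimpleGraph (α ⊕ Fin (K + 1) ⊕ Unit)}
    (hle : gadgetGraph F A K ≤ H) (hapex : ∀ i, H.Adj (.inr (.inr ())) (.inr (.inl i))) :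
    K + 1 ≤ fill (gadgetGraph F A K) H := by
  let e : Fin (K + 1) → Sym2 (α ⊕ Fin (K + 1) ⊕ Unit) := fun i => s(.inr (.inr ()), .inr (.inl i))
  have he : Function.Injective e := fun i j hij => by simpa [e] using Sym2.congr_right.mp hij
  have hfill : Set.range e ⊆ H.edgeSet \ (gadgetGraph F A K).edgeSet := by
    rintro _ ⟨i, rfl⟩
    exact ⟨hapex i, gadgetGraph_not_adj_apex_hub i⟩
  calc K + 1 = (Set.range e).ncard := by simp [Set.ncard_range_of_injective he]
    _ ≤ fill (gadgetGraph F A K) H := by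
      rw [fill_eq_ncard_sdiff hle]
      exact Set.ncard_le_ncard hfill

end Gadget

theorem gadget_completion_A_clique_general {α : Type*} [Fintype α] (F : SimpleGraph α)
    (A : Set α) (K : ℕ)
    (H : SimpleGraph (α ⊕ Fin (K + 1) ⊕ Unit))
    (hcomp : IsChordalCompletion (gadgetGraph F A K) H)
    (hfill : fill (gadgetGraph F A K) H ≤ K) :
    H.IsClique (Sum.inl '' A) := by
  rintro _ ⟨a, ha, rfl⟩ _ ⟨a', ha', rfl⟩ hne
  by_contra hnadj
  have := succ_le_fill_gadget hcomp.1
    (hcomp.gadget_adj_apex_hub ha ha' (ne_of_apply_ne _ hne) hnadj)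
  omega

/-- If `H` is a chordal completion of the gadget graph `G` with at most
`K = k + |A|(|A|-1)/2` fill edges, then `A` is a clique of `H`. -/
theorem gadget_completion_A_clique {α : Type*} [Fintype α] (F : SimpleGraph α)
    (A B : Set α) (hcover : A ∪ B = Set.univ) (hdisj : Disjoint A B)
    (hA : F.IsClique A) (hB : F.IsClique B) (k K : ℕ)
    (hK : K = k + A.ncard * (A.ncard - 1) / 2)
    (H : SimpleGraph (α ⊕ Fin (K + 1) ⊕ Unit))
    (hcomp : IsChordalCompletion (gadgetGraph F A K) H)
    (hfill : fill (gadgetGraph F A K) H ≤ K) :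
    H.IsClique (Sum.inl '' A) :=
  gadget_completion_A_clique_general F A K H hcomp hfill
end

section
/- Let G be a graph, let H be a minimum chordal completion of G and let v be a vertex of G. If N_H(v) is a clique of H, then N_H(v) = N_G(v), i.e., no fill edge of H is incident to v. -/
/-
Deleting the fill edges at `v` from `H` keeps it a completion of `G`, and it stays chordal: an
induced cycle of length at least four through `v` enters and leaves `v` along edges of `G`, so its
two neighbours on the cycle lie in the clique `N_H(v)` and are joined by a chord, while an induced
cycle avoiding `v` would already be an induced cycle of `H`. By minimality nothing was deleted.
-/

variable {V : Type*}

open SimpleGraph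

lemma ZMod.natCast_ne_zero_of_pos_of_lt {n k : ℕ} (hk : 0 < k) (hkn : k < n) :
    (k : ZMod n) ≠ 0 := by
  rw [Ne, ZMod.natCast_eq_zero_iff]
  exact fun hdvd => absurd (Nat.le_of_dvd hk hdvd) (by omega)

namespace IsInducedCycleMap

variable {G H : SimpleGraph V} {n : ℕ} {f : ZMod n → V}

lemma of_adj_iff (hf : IsInducedCycleMap G n f)
    (h : ∀ i j, H.Adj (f i) (f j) ↔ G.Adj (f i) (f j)) : IsInducedCycleMap H n f :=
  ⟨hf.1, fun i j => (h i j).trans (hf.2 i j)⟩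

lemma adj_pred (hf : IsInducedCycleMap G n f) (i : ZMod n) : G.Adj (f i) (f (i - 1)) :=
  (hf.2 i (i - 1)).mpr (Or.inr (sub_add_cancel i 1).symm)

lemma adj_succ (hf : IsInducedCycleMap G n f) (i : ZMod n) : G.Adj (f i) (f (i + 1)) :=
  (hf.2 i (i + 1)).mpr (Or.inl rfl)

lemma pred_ne_succ (hf : IsInducedCycleMap G n f) (hn : 3 ≤ n) (i : ZMod n) :
    f (i - 1) ≠ f (i + 1) := fun h => by
  have h2 := ZMod.natCast_ne_zero_of_pos_of_lt (n := n) (k := 2) (by omega) (by omega)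
  exact h2 (by push_cast; linear_combination -hf.1 h)

lemma not_adj_pred_succ (hf : IsInducedCycleMap G n f) (hn : 4 ≤ n) (i : ZMod n) :
    ¬ G.Adj (f (i - 1)) (f (i + 1)) := fun h => by
  have h1 := ZMod.natCast_ne_zero_of_pos_of_lt (n := n) (k := 1) (by omega) (by omega)
  have h3 := ZMod.natCast_ne_zero_of_pos_of_lt (n := n) (k := 3) (by omega) (by omega)
  push_cast at h1 h3
  rcases (hf.2 _ _).mp h with h | h
  · exact h1 (by linear_combination h)
  · exact h3 (by linear_combination -h)

end IsInducedCycleMap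

namespace SimpleGraph

variable {G H : SimpleGraph V} {v : V}

lemma sup_deleteIncidenceSet_adj_left {w : V} :
    (G ⊔ H.deleteIncidenceSet v).Adj v w ↔ G.Adj v w := by
  simp [deleteIncidenceSet_adj]

lemma sup_deleteIncidenceSet_adj_of_ne (hGH : G ≤ H) {a b : V} (ha : a ≠ v) (hb : b ≠ v) :
    (G ⊔ H.deleteIncidenceSet v).Adj a b ↔ H.Adj a b := by
  simp only [sup_adj, deleteIncidenceSet_adj]
  exact ⟨fun h => h.elim (@hGH a b) (·.1), fun h => Or.inr ⟨h, ha, hb⟩⟩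

lemma neighborSet_sup_deleteIncidenceSet_self :
    (G ⊔ H.deleteIncidenceSet v).neighborSet v = G.neighborSet v :=
  Set.ext fun _ => sup_deleteIncidenceSet_adj_left

end SimpleGraph

lemma Chordal.sup_deleteIncidenceSet {G H : SimpleGraph V} {v : V} (hH : Chordal H) (hGH : G ≤ H)
    (hclique : H.IsClique (H.neighborSet v)) : Chordal (G ⊔ H.deleteIncidenceSet v) := by
  rintro n hn ⟨f, hf⟩
  by_cases hfv : ∃ i, f i = v
  · obtain ⟨i, rfl⟩ := hfv
    have hpred := hf.adj_pred i
    have hsucc := hf.adj_succ i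
    have hchord : H.Adj (f (i - 1)) (f (i + 1)) :=
      hclique (hGH (sup_deleteIncidenceSet_adj_left.mp hpred))
        (hGH (sup_deleteIncidenceSet_adj_left.mp hsucc)) (hf.pred_ne_succ (by omega) i)
    exact hf.not_adj_pred_succ hn i <|
      (sup_deleteIncidenceSet_adj_of_ne hGH hpred.ne' hsucc.ne').mpr hchord
  · push Not at hfv
    exact hH n hn ⟨f, hf.of_adj_iff fun i j =>
      (sup_deleteIncidenceSet_adj_of_ne hGH (hfv i) (hfv j)).symm⟩

lemma IsMinChordalCompletion.eq_of_le [Finite V] {G H H' : SimpleGraph V}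
    (hmin : IsMinChordalCompletion G H) (hH' : IsChordalCompletion G H') (hle : H' ≤ H) :
    H' = H :=
  edgeSet_injective <|
    Set.eq_of_subset_of_ncard_le (edgeSet_mono hle) (hmin.2 H' hH') (Set.toFinite _)

/-- If `H` is a minimum chordal completion of `G` and `N_H(v)` is a clique of `H`,
then `N_H(v) = N_G(v)`, i.e. no fill edge is incident to `v`. -/
theorem min_completion_simplicial_no_fill [Fintype V] (G H : SimpleGraph V)
    (hmin : IsMinChordalCompletion G H) (v : V)
    (hclique : H.IsClique (H.neighborSet v)) :
    H.neighborSet v = G.neighborSet v := by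
  obtain ⟨hGH, hH⟩ := hmin.1
  have hH' : IsChordalCompletion G (G ⊔ H.deleteIncidenceSet v) :=
    ⟨le_sup_left, hH.sup_deleteIncidenceSet hGH hclique⟩
  have hle : G ⊔ H.deleteIncidenceSet v ≤ H := sup_le hGH (H.deleteIncidenceSet_le v)
  rw [← hmin.eq_of_le hH' hle]
  exact neighborSet_sup_deleteIncidenceSet_self
end
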